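/- arXiv:2405.20394 — 2 statements merged into one kernel-verified Lean document; each statement's English description precedes it below -/
import Mathlib

section
/- Let m = 2g + 2 ≥ 4 be even. Then (2πi)^{−3g} · ∏_{k ∈ I} Γ(k/m)²·Γ([−2k]/m) = i^{−3g}·4·m^{−2}, where I = {1, …, m−1} \ {m/2} and, for k ∈ I, [−2k] ∈ {1, …, m−1} denotes the representative of −2k modulo m (which is nonzero since k ≠ m/2). -/
/-!
Reflection `Γ(x) Γ(1 - x) = π / sin(π x)` together with `∏_{k=1}^{n-1} 2 sin(π k / n) = n`
(the norm of `∏ (1 - ζ^k) = n` for a primitive `n`-th root of unity `ζ`) gives Gauss's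
`(∏_{k=1}^{n-1} Γ(k/n))² = (2π)^(n-1) / n`. With `m = 2g + 2`, the factors `Γ(k/m)²` are this
product for `n = m` with `Γ(1/2)² = π` removed, while `[-2k]/m` runs twice through `j/(g+1)`,
`1 ≤ j ≤ g`, so the factors `Γ([-2k]/m)` give the square of the product for `n = g + 1`.
-/

/-- For `x : ℤ` not divisible by `m`, `repZ m x ∈ {1, …, m-1}` is the representative of
`x` modulo `m` (in general it is the representative in `{0, …, m-1}`). -/
def repZ (m : ℕ) (x : ℤ) : ℕ := (x % (m : ℤ)).toNat

open Finset

lemma repZ_eq_of_modEq {m r : ℕ} {x : ℤ} (hr : r < m) (h : x ≡ r [ZMOD m]) : repZ m x = r := by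
  rw [repZ, h, Int.emod_eq_of_lt (by positivity) (by exact_mod_cast hr)]
  simp

lemma Finset.prod_Icc_one_reflect {M : Type*} [CommMonoid M] (f : ℕ → M) (n : ℕ) :
    ∏ j ∈ Icc 1 n, f (n + 1 - j) = ∏ j ∈ Icc 1 n, f j := by
  rw [← Ico_add_one_right_eq_Icc, prod_Ico_reflect f 1 (Nat.le_succ (n + 1))]
  simp

open Real in
lemma Real.prod_two_mul_sin_pi_mul_div (n : ℕ) :
    ∏ k ∈ Icc 1 n, 2 * sin (π * k / (n + 1)) = n + 1 := by
  have hζ := Complex.isPrimitiveRoot_exp (n + 1) n.succ_ne_zero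
  have hchord : ∀ k ∈ Icc 1 n, 2 * sin (π * k / (n + 1)) =
      ‖1 - Complex.exp (2 * π * Complex.I / (n + 1 : ℕ)) ^ k‖ := by
    intro k hk
    have hk := mem_Icc.1 hk
    have hsin : 0 ≤ sin (π * k / (n + 1)) := sin_nonneg_of_nonneg_of_le_pi (by positivity) (by
      rw [div_le_iff₀ (by positivity)]; gcongr; exact_mod_cast hk.2.trans n.le_succ)
    rw [norm_sub_rev, ← Complex.exp_nat_mul,
      show (k : ℂ) * (2 * π * Complex.I / (n + 1 : ℕ)) =
        Complex.I * ((2 * π * k / (n + 1) : ℝ) : ℂ) by push_cast; ring,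
      Complex.norm_exp_I_mul_ofReal_sub_one,
      show 2 * π * k / (n + 1) / 2 = π * k / (n + 1) by ring, Real.norm_of_nonneg (by positivity)]
  rw [prod_congr rfl hchord, ← norm_prod, ← Ico_add_one_right_eq_Icc, prod_Ico_eq_prod_range,
    add_tsub_cancel_right]
  simp_rw [add_comm 1]
  rw [hζ.prod_one_sub_pow_eq_order]
  exact_mod_cast Complex.norm_natCast (n + 1)

open Real in
lemma Complex.prod_Gamma_div_sq (n : ℕ) :
    (∏ k ∈ Icc 1 n, Gamma (k / (n + 1))) ^ 2 = (2 * π) ^ n / (n + 1) := by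
  have hreflect :
      ∏ k ∈ Icc 1 n, Gamma (k / (n + 1)) = ∏ k ∈ Icc 1 n, Gamma (1 - k / (n + 1)) := by
    rw [← prod_Icc_one_reflect]
    refine prod_congr rfl fun k hk => ?_
    rw [Nat.cast_sub (by grind), Nat.cast_succ]
    congr 1
    field_simp
  have hsin : ∏ k ∈ Icc 1 n, sin (π * (k / (n + 1))) = (n + 1) / 2 ^ n := by
    have h := congrArg ((↑) : ℝ → ℂ) (Real.prod_two_mul_sin_pi_mul_div n)
    push_cast at h
    rw [prod_mul_distrib, prod_const, Nat.card_Icc, add_tsub_cancel_right] at h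
    rw [eq_div_iff (by simp), mul_comm]
    simpa only [mul_div_assoc] using h
  calc (∏ k ∈ Icc 1 n, Gamma (k / (n + 1))) ^ 2
      = ∏ k ∈ Icc 1 n, Gamma (k / (n + 1)) * Gamma (1 - k / (n + 1)) := by
        rw [prod_mul_distrib, ← hreflect, sq]
    _ = π ^ n / ((n + 1) / 2 ^ n) := by
        simp_rw [Gamma_mul_Gamma_one_sub]
        rw [prod_div_distrib, prod_const, Nat.card_Icc, add_tsub_cancel_right, hsin]
    _ = (2 * π) ^ n / (n + 1) := by
        rw [mul_pow]
        field_simp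

lemma Complex.Gamma_one_half_sq : Gamma (1 / 2) ^ 2 = Real.pi := by
  have h := Gamma_mul_Gamma_one_sub (1 / 2)
  rw [show (1 : ℂ) - 1 / 2 = 1 / 2 by norm_num, mul_one_div, sin_pi_div_two, div_one] at h
  rw [sq, h]

lemma prod_erase_repZ_neg_two_mul {M : Type*} [CommMonoid M] (f : ℕ → M) (g : ℕ) :
    ∏ k ∈ (Icc 1 (2 * g + 1)).erase (g + 1), f (repZ (2 * g + 2) (-(2 * (k : ℤ))))
      = (∏ j ∈ Icc 1 g, f (2 * j)) ^ 2 := by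
  have hsplit : (Icc 1 (2 * g + 1)).erase (g + 1) =
      Icc 1 g ∪ (Icc 1 g).map (addRightEmbedding (g + 1)) := by
    ext k; simp only [map_add_right_Icc, mem_erase, mem_Icc, mem_union]; omega
  have hdisj : Disjoint (Icc 1 g) ((Icc 1 g).map (addRightEmbedding (g + 1))) := by
    simp only [map_add_right_Icc, disjoint_left, mem_Icc]; omega
  have hrep : ∀ k ∈ Icc 1 g, ∀ c : ℕ,
      repZ (2 * g + 2) (-(2 * ((k + c * (g + 1) : ℕ) : ℤ))) = 2 * (g + 1 - k) := by
    intro k hk c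
    have hk := mem_Icc.1 hk
    refine repZ_eq_of_modEq (by omega) (Int.modEq_iff_dvd.2 ⟨c + 1, ?_⟩)
    push_cast [Nat.cast_sub (by omega : k ≤ g + 1)]
    ring
  have hhalf : ∀ c : ℕ,
      ∏ k ∈ Icc 1 g, f (repZ (2 * g + 2) (-(2 * ((k + c * (g + 1) : ℕ) : ℤ)))) =
        ∏ j ∈ Icc 1 g, f (2 * j) := fun c => by
    rw [prod_congr rfl fun k hk => by rw [hrep k hk c]]
    exact prod_Icc_one_reflect (fun j => f (2 * j)) g
  rw [hsplit, prod_union hdisj, prod_map, sq]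
  simpa using congrArg₂ (· * ·) (hhalf 0) (hhalf 1)

theorem gamma_value_determinant_character_even_general
    (g : ℕ) :
    (2 * (Real.pi : ℂ) * Complex.I) ^ (-(3 * (g : ℤ))) *
        ∏ k ∈ (Finset.Icc 1 (2 * g + 1)).erase (g + 1),
          (Complex.Gamma ((k : ℂ) / ((2 * g + 2 : ℕ) : ℂ)) ^ 2 *
            Complex.Gamma ((repZ (2 * g + 2) (-(2 * (k : ℤ))) : ℂ) / ((2 * g + 2 : ℕ) : ℂ)))
      = Complex.I ^ (-(3 * (g : ℤ))) * 4 * ((2 * g + 2 : ℕ) : ℂ) ^ (-(2 : ℤ)) := by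
  have hfull := Complex.prod_Gamma_div_sq (2 * g + 1)
  rw [show ((2 * g + 1 : ℕ) : ℂ) + 1 = ((2 * g + 2 : ℕ) : ℂ) by push_cast; ring,
    ← mul_prod_erase _ _ (mem_Icc.2 ⟨by omega, by omega⟩ : g + 1 ∈ Icc 1 (2 * g + 1)), mul_pow,
    show ((g + 1 : ℕ) : ℂ) / ((2 * g + 2 : ℕ) : ℂ) = 1 / 2 by
      rw [div_eq_div_iff (Nat.cast_ne_zero.2 (by omega)) two_ne_zero]; push_cast; ring,
    Complex.Gamma_one_half_sq] at hfull
  have hres := prod_erase_repZ_neg_two_mul (fun r => Complex.Gamma (r / ((2 * g + 2 : ℕ) : ℂ))) g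
  rw [prod_congr rfl fun j _ => show Complex.Gamma (((2 * j : ℕ) : ℂ) / ((2 * g + 2 : ℕ) : ℂ)) =
      Complex.Gamma (j / (g + 1)) by push_cast; congr 1; field_simp,
    Complex.prod_Gamma_div_sq] at hres
  rw [prod_mul_distrib, prod_pow, hres]
  generalize (∏ k ∈ (Icc 1 (2 * g + 1)).erase (g + 1),
    Complex.Gamma (k / ((2 * g + 2 : ℕ) : ℂ))) = A at hfull ⊢
  rw [show -(3 * (g : ℤ)) = -((3 * g : ℕ) : ℤ) by push_cast; ring,
    mul_zpow, zpow_neg, zpow_neg, zpow_neg, zpow_natCast, zpow_natCast, zpow_ofNat]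
  have hπ : (Real.pi : ℂ) ≠ 0 := Complex.ofReal_ne_zero.2 Real.pi_ne_zero
  push_cast at hfull ⊢
  field_simp at hfull ⊢
  have hA : A ^ 2 * (g + 1) = (Real.pi * 2) ^ (2 * g) :=
    mul_left_cancel₀ (mul_ne_zero hπ two_ne_zero) (by linear_combination hfull)
  rw [show 3 * g = g + 2 * g by ring, pow_add, ← hA]
  ring

/-- Proposition 6.4.3, even case. Let `m = 2g + 2 ≥ 4` be even. Then
`(2πi)^(-3g) · ∏_{k ∈ I} Γ(k/m)²·Γ([-2k]/m) = i^(-3g)·4·m^(-2)`, where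
`I = {1, …, m-1} \ {m/2}`. -/
theorem gamma_value_determinant_character_even
    (g : ℕ) (hg : 1 ≤ g) :
    (2 * (Real.pi : ℂ) * Complex.I) ^ (-(3 * (g : ℤ))) *
        ∏ k ∈ (Finset.Icc 1 (2 * g + 1)).erase (g + 1),
          (Complex.Gamma ((k : ℂ) / ((2 * g + 2 : ℕ) : ℂ)) ^ 2 *
            Complex.Gamma ((repZ (2 * g + 2) (-(2 * (k : ℤ))) : ℂ) / ((2 * g + 2 : ℕ) : ℂ)))
      = Complex.I ^ (-(3 * (g : ℤ))) * 4 * ((2 * g + 2 : ℕ) : ℂ) ^ (-(2 : ℤ)) :=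
  gamma_value_determinant_character_even_general g
end

section
/- The following exact evaluation holds: ( Γ(10/15)³·Γ(12/15)²·Γ(6/15) / (Γ(8/15)²·Γ(14/15)³·Γ(2/15)) )² = (3/16)·√5·( sin(π/15)³·sin(6π/15) / (sin(2π/15)·sin(3π/15)⁴·sin(5π/15)³) ). -/
/-!
Taking logarithms turns the identity into a linear relation between the numbers `log Γ(k/15)`,
`log sin(kπ/15)`, `log 2`, `log 3` and `log 5`. It is a rational combination of the reflection
formula at `k/15` for `k = 1, 2, 3, 5, 6`, Gauss's multiplication formula for `n = 3` at
`s = 1/5, …, 4/5` and for `n = 5` at `s = 1/3, 2/3`, and `sin(π/3) = √3/2`.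

The multiplication formula `∏_{k<n} Γ((s+k)/n) = n^(1-s) · Γ(s) · ∏_{k<n} Γ((1+k)/n)` follows from
the Bohr–Mollerup theorem. Its constant is left unevaluated: here it is a product of values
`Γ(k/15)`, which the reflection formula already controls.
-/

open Real Set Finset

theorem ConvexOn.sum {𝕜 E β ι : Type*} [Semiring 𝕜] [PartialOrder 𝕜] [AddCommMonoid E]
    [AddCommMonoid β] [PartialOrder β] [IsOrderedAddMonoid β] [SMul 𝕜 E] [Module 𝕜 β]
    {s : Set E} (hs : Convex 𝕜 s) {t : Finset ι} {f : ι → E → β}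
    (hf : ∀ i ∈ t, ConvexOn 𝕜 s (f i)) : ConvexOn 𝕜 s (fun x => ∑ i ∈ t, f i x) := by
  simpa only [← Finset.sum_apply] using
    Finset.sum_induction f (ConvexOn 𝕜 s) (fun _ _ => ConvexOn.add) (convexOn_const 0 hs) hf

namespace Real

theorem convexOn_log_Gamma_add_div {n : ℝ} (hn : 0 < n) {k : ℝ} (hk : 0 ≤ k) :
    ConvexOn ℝ (Ioi 0) (fun s => log (Gamma ((s + k) / n))) := by
  refine ⟨convex_Ioi 0, fun x (hx : 0 < x) y (hy : 0 < y) a b ha hb hab => ?_⟩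
  have h := convexOn_log_Gamma.2 (x := (x + k) / n) (y := (y + k) / n)
    (show 0 < (x + k) / n by positivity) (show 0 < (y + k) / n by positivity) ha hb hab
  have harg : (a • x + b • y + k) / n = a • ((x + k) / n) + b • ((y + k) / n) := by
    simp only [smul_eq_mul]
    field_simp
    linear_combination k * hab.symm
  simpa only [harg, Function.comp_apply] using h

theorem convexOn_log_prod_Gamma_add_div {n : ℕ} (hn : 0 < n) :
    ConvexOn ℝ (Ioi 0) (fun s => log (∏ k ∈ range n, Gamma ((s + k) / n))) := by
  refine (ConvexOn.sum (t := range n) (convex_Ioi 0) fun k _ =>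
    convexOn_log_Gamma_add_div (Nat.cast_pos.2 hn) (Nat.cast_nonneg k)).congr
    fun s (hs : 0 < s) => ?_
  exact (log_prod fun k _ => (Gamma_pos_of_pos (by positivity)).ne').symm

theorem prod_Gamma_add_one_add_div {n : ℕ} (hn : 0 < n) {s : ℝ} (hs : 0 < s) :
    ∏ k ∈ range n, Gamma ((s + 1 + k) / n) = s / n * ∏ k ∈ range n, Gamma ((s + k) / n) := by
  have hshift := prod_range_succ' (fun k : ℕ => Gamma ((s + k) / n)) n
  rw [prod_range_succ] at hshift
  have hlast : Gamma ((s + n) / n) = s / n * Gamma (s / n) := by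
    rw [add_div, div_self (by positivity), Gamma_add_one (by positivity)]
  simp only [Nat.cast_succ, ← add_assoc, Nat.cast_zero, add_zero, hlast] at hshift
  have h0 : Gamma (s / n) ≠ 0 := (Gamma_pos_of_pos (by positivity)).ne'
  simp_rw [add_right_comm s 1]
  exact mul_right_cancel₀ h0 (by linear_combination hshift.symm)

theorem prod_Gamma_add_div {n : ℕ} (hn : 0 < n) {s : ℝ} (hs : 0 < s) :
    ∏ k ∈ range n, Gamma ((s + k) / n) =
      n ^ (1 - s) * (∏ k ∈ range n, Gamma ((1 + k) / n)) * Gamma s := by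
  have hprod_pos : ∀ {y : ℝ}, 0 < y → 0 < ∏ k ∈ range n, Gamma ((y + k) / n) :=
    fun hy => prod_pos fun k _ => Gamma_pos_of_pos (by positivity)
  set C := ∏ k ∈ range n, Gamma ((1 + k) / n)
  have hC : 0 < C := hprod_pos one_pos
  have hconv : ConvexOn ℝ (Ioi 0)
      (log ∘ fun y => (n : ℝ) ^ (y - 1) * (∏ k ∈ range n, Gamma ((y + k) / n)) / C) := by
    refine ((((convexOn_id (convex_Ioi 0)).smul (log_nonneg (Nat.one_le_cast.2 hn))).add
      (convexOn_log_prod_Gamma_add_div hn)).add_const (-log n - log C)).congr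
      fun y (hy : 0 < y) => ?_
    simp only [Function.comp_apply, Pi.add_apply, id_eq, smul_eq_mul]
    rw [log_div (mul_pos (by positivity) (hprod_pos hy)).ne' hC.ne',
      log_mul (by positivity) (hprod_pos hy).ne', log_rpow (by positivity)]
    ring
  have hfeq : ∀ {y : ℝ}, 0 < y →
      (n : ℝ) ^ (y + 1 - 1) * (∏ k ∈ range n, Gamma ((y + 1 + k) / n)) / C =
        y * ((n : ℝ) ^ (y - 1) * (∏ k ∈ range n, Gamma ((y + k) / n)) / C) := by
    intro y hy
    rw [prod_Gamma_add_one_add_div hn hy, add_sub_cancel_right, rpow_sub_one (by positivity)]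
    field_simp
  have h := eq_Gamma_of_log_convex hconv hfeq (fun hy => by have := hprod_pos hy; positivity)
    (by simp only [sub_self, rpow_zero, one_mul]; exact div_self hC.ne') hs
  have hpow : (n : ℝ) ^ (1 - s) * n ^ (s - 1) = 1 := by
    rw [← rpow_add (Nat.cast_pos.2 hn)]; norm_num
  rw [← h]
  field_simp
  linear_combination hpow.symm

theorem sum_log_Gamma_add_div {n : ℕ} (hn : 0 < n) {s : ℝ} (hs : 0 < s) :
    ∑ k ∈ range n, log (Gamma ((s + k) / n)) =
      (1 - s) * log n + ∑ k ∈ range n, log (Gamma ((1 + k) / n)) + log (Gamma s) := by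
  have hΓ : ∀ {y : ℝ}, 0 < y → ∀ k ∈ range n, Gamma ((y + k) / n) ≠ 0 :=
    fun hy k _ => (Gamma_pos_of_pos (by positivity)).ne'
  rw [← log_prod (hΓ hs), ← log_prod (hΓ one_pos), prod_Gamma_add_div hn hs,
    log_mul (by positivity) (Gamma_pos_of_pos hs).ne',
    log_mul (by positivity) (prod_ne_zero_iff.2 (hΓ one_pos)), log_rpow (Nat.cast_pos.2 hn)]

theorem log_Gamma_add_log_Gamma_one_sub {x : ℝ} (h0 : 0 < x) (h1 : x < 1) :
    log (Gamma x) + log (Gamma (1 - x)) = log π - log (sin (π * x)) := by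
  rw [← log_mul (Gamma_pos_of_pos h0).ne' (Gamma_pos_of_pos (sub_pos.2 h1)).ne',
    Gamma_mul_Gamma_one_sub, log_div pi_ne_zero
      (sin_pos_of_pos_of_lt_pi (by positivity) (by nlinarith [pi_pos])).ne']

end Real

theorem log_gamma_value_x10x12_x8x14 :
    2 * (3 * log (Gamma (10 / 15)) + 2 * log (Gamma (12 / 15)) + log (Gamma (6 / 15))
      - 2 * log (Gamma (8 / 15)) - 3 * log (Gamma (14 / 15)) - log (Gamma (2 / 15))) =
    log 3 - 4 * log 2 + log 5 / 2 + 3 * log (sin (π / 15)) + log (sin (6 * π / 15))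
      - log (sin (2 * π / 15)) - 4 * log (sin (3 * π / 15)) - 3 * log (sin (5 * π / 15)) := by
  have refl1 := log_Gamma_add_log_Gamma_one_sub (x := 1 / 15) (by norm_num) (by norm_num)
  have refl2 := log_Gamma_add_log_Gamma_one_sub (x := 2 / 15) (by norm_num) (by norm_num)
  have refl3 := log_Gamma_add_log_Gamma_one_sub (x := 3 / 15) (by norm_num) (by norm_num)
  have refl5 := log_Gamma_add_log_Gamma_one_sub (x := 5 / 15) (by norm_num) (by norm_num)
  have refl6 := log_Gamma_add_log_Gamma_one_sub (x := 6 / 15) (by norm_num) (by norm_num)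
  have mul3_1 := sum_log_Gamma_add_div (n := 3) (by norm_num) (s := 1 / 5) (by norm_num)
  have mul3_2 := sum_log_Gamma_add_div (n := 3) (by norm_num) (s := 2 / 5) (by norm_num)
  have mul3_3 := sum_log_Gamma_add_div (n := 3) (by norm_num) (s := 3 / 5) (by norm_num)
  have mul3_4 := sum_log_Gamma_add_div (n := 3) (by norm_num) (s := 4 / 5) (by norm_num)
  have mul5_1 := sum_log_Gamma_add_div (n := 5) (by norm_num) (s := 1 / 3) (by norm_num)
  have mul5_2 := sum_log_Gamma_add_div (n := 5) (by norm_num) (s := 2 / 3) (by norm_num)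
  have hsin : log (sin (π / 3)) = log 3 / 2 - log 2 := by
    rw [sin_pi_div_three, log_div (by positivity) two_ne_zero, log_sqrt (by norm_num)]
  norm_num [sum_range_succ] at mul3_1 mul3_2 mul3_3 mul3_4 mul5_1 mul5_2
  linear_combination (norm := ring_nf) -3 * refl1 + refl2 + 4 * refl3 - refl5 - refl6
    + 3/2 * mul3_1 - 3/2 * mul3_2 - 5/2 * mul3_3 - 3/2 * mul3_4 + 3/2 * mul5_1 - 3/2 * mul5_2
    + 4 * hsin

theorem real_gamma_value_x10x12_x8x14_sq :
    (Gamma (10 / 15) ^ 3 * Gamma (12 / 15) ^ 2 * Gamma (6 / 15) /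
      (Gamma (8 / 15) ^ 2 * Gamma (14 / 15) ^ 3 * Gamma (2 / 15))) ^ 2 =
      3 / 16 * √5 * (sin (π / 15) ^ 3 * sin (6 * π / 15) /
        (sin (2 * π / 15) * sin (3 * π / 15) ^ 4 * sin (5 * π / 15) ^ 3)) := by
  have hsin : ∀ k : ℝ, 0 < k → k < 15 → 0 < sin (k * π / 15) := fun k hk hk15 =>
    sin_pos_of_pos_of_lt_pi (by positivity) (by nlinarith [pi_pos])
  have h1 : 0 < sin (π / 15) := by simpa using hsin 1 one_pos (by norm_num)
  have h2 := hsin 2 two_pos (by norm_num)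
  have h3 := hsin 3 three_pos (by norm_num)
  have h5 := hsin 5 (by norm_num) (by norm_num)
  have h6 := hsin 6 (by norm_num) (by norm_num)
  refine log_injOn_pos (mem_Ioi.2 (by positivity)) (mem_Ioi.2 (by positivity)) ?_
  simp (disch := positivity) only [log_mul, log_div, log_pow, log_sqrt, Nat.cast_ofNat]
  have h16 : log 16 = 4 * log 2 := by
    rw [show (16 : ℝ) = 2 ^ 4 by norm_num, log_pow, Nat.cast_ofNat]
  linear_combination log_gamma_value_x10x12_x8x14 + h16

/-- Example 6.4.9. Exact evaluation of the square of the Gamma-value of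
the equation `x₁₀·x₁₂/(x₈·x₁₄)` for the Mumford–Tate group of the Jacobian of
`y² = x¹⁵ + 1`:
`(Γ(10/15)³·Γ(12/15)²·Γ(6/15) / (Γ(8/15)²·Γ(14/15)³·Γ(2/15)))²
  = (3/16)·√5·(sin(π/15)³·sin(6π/15) / (sin(2π/15)·sin(3π/15)⁴·sin(5π/15)³))`. -/
theorem gamma_value_x10x12_x8x14_sq :
    (Complex.Gamma (10 / 15) ^ 3 * Complex.Gamma (12 / 15) ^ 2 * Complex.Gamma (6 / 15) /
        (Complex.Gamma (8 / 15) ^ 2 * Complex.Gamma (14 / 15) ^ 3 *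
          Complex.Gamma (2 / 15))) ^ 2
      = (((3 / 16 : ℝ) * Real.sqrt 5 *
          (Real.sin (Real.pi / 15) ^ 3 * Real.sin (6 * Real.pi / 15) /
            (Real.sin (2 * Real.pi / 15) * Real.sin (3 * Real.pi / 15) ^ 4 *
              Real.sin (5 * Real.pi / 15) ^ 3)) : ℝ) : ℂ) := by
  rw [← real_gamma_value_x10x12_x8x14_sq]
  push_cast [← Complex.Gamma_ofReal]
  rfl
end
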